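/- arXiv:1812.05771 — 3 statements merged into one kernel-verified Lean document; each statement's English description precedes it below -/
import Mathlib

section
/- For a ∈ ℤ and n ∈ ℕ, the (q,π)-binomial coefficient [a choose n]_{q,π} = (∏_{i=1}^n [a+1-i]_{q,π}) / [n]_{q,π}^! lies in ℤ[q,q^{-1},π] (i.e., it is a Laurent polynomial in q with coefficients in ℤ[π]/(π²-1)). -/
namespace QPi

variable {R : Type*} [CommRing R]

/-- Division-free `(q,π)`-integer `[n]_{q,π} = ((πq)^n − q^{−n})/(πq − q^{−1})` for `n : ℕ`. -/
def qpIntN (p q : Rˣ) (n : ℕ) : R :=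
  ∑ k ∈ Finset.range n, ((p * q : Rˣ) : R) ^ (n - 1 - k) * ((q⁻¹ : Rˣ) : R) ^ k

/-- The `(q,π)`-integer for an arbitrary integer argument, `[−a] = −π^a [a]`. -/
def qpInt (p q : Rˣ) (a : ℤ) : R :=
  if 0 ≤ a then qpIntN p q a.toNat
  else -((p : R) ^ a.natAbs) * qpIntN p q a.natAbs

/-- The `(q,π)`-factorial `[n]^!_{q,π}`. -/
def qpFact (p q : Rˣ) (n : ℕ) : R :=
  ∏ i ∈ Finset.range n, qpIntN p q (i + 1)

/-- The `(q,π)`-binomial coefficient with natural-number top, via the Pascal rule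
`[m+1 choose t+1] = q^{-(t+1)} [m choose t+1] + (πq)^{m−t} [m choose t]`. -/
def qpBinomN (p q : Rˣ) : ℕ → ℕ → R
  | _, 0 => 1
  | 0, _ + 1 => 0
  | m + 1, t + 1 =>
      ((q⁻¹ : Rˣ) : R) ^ (t + 1) * qpBinomN p q m (t + 1)
        + ((p * q : Rˣ) : R) ^ (m - t) * qpBinomN p q m t

/-- The `(q,π)`-binomial coefficient with integer top, using
`[a choose t] = (−1)^t π^{|a|t + t(t−1)/2} [t−a−1 choose t]` for `a < 0`. -/
def qpBinom (p q : Rˣ) (a : ℤ) (t : ℕ) : R :=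
  if 0 ≤ a then qpBinomN p q a.toNat t
  else (-1 : R) ^ t * (p : R) ^ (a.natAbs * t + t * (t - 1) / 2) *
    qpBinomN p q (t + a.natAbs - 1) t

/-- The ordinary binomial coefficient `C(n,k)` with integer top. -/
def intChoose (n : ℤ) (k : ℕ) : ℤ :=
  if 0 ≤ n then (n.toNat.choose k : ℤ)
  else (-1) ^ k * ((k + n.natAbs - 1).choose k : ℤ)

/-! Auxiliary lemmas -/

lemma qpIntN_zero (p q : Rˣ) : qpIntN p q 0 = 0 := by simp [qpIntN]

lemma qpFact_succ (p q : Rˣ) (n : ℕ) :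
    qpFact p q (n + 1) = qpFact p q n * qpIntN p q (n + 1) :=
  Finset.prod_range_succ _ _

lemma qpIntN_add (p q : Rˣ) (a b : ℕ) :
    qpIntN p q (a + b) =
      ((p * q : Rˣ) : R) ^ b * qpIntN p q a + ((q⁻¹ : Rˣ) : R) ^ a * qpIntN p q b := by
  unfold qpIntN
  rw [Finset.sum_range_add, Finset.mul_sum, Finset.mul_sum]
  congr 1
  · refine Finset.sum_congr rfl fun k hk => ?_
    rw [Finset.mem_range] at hk
    rw [← mul_assoc, ← pow_add]
    congr 2
    omega
  · refine Finset.sum_congr rfl fun k hk => ?_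
    rw [Finset.mem_range] at hk
    have h1 : a + b - 1 - (a + k) = b - 1 - k := by omega
    rw [h1, pow_add]
    ring

lemma qpBinomN_eq_zero (p q : Rˣ) : ∀ m t : ℕ, m < t → qpBinomN p q m t = 0 := by
  intro m
  induction m with
  | zero =>
    intro t ht
    obtain ⟨s, rfl⟩ : ∃ s, t = s + 1 := ⟨t - 1, by omega⟩
    rfl
  | succ m ih =>
    intro t ht
    obtain ⟨s, rfl⟩ : ∃ s, t = s + 1 := ⟨t - 1, by omega⟩
    show ((q⁻¹ : Rˣ) : R) ^ (s + 1) * qpBinomN p q m (s + 1)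
        + ((p * q : Rˣ) : R) ^ (m - s) * qpBinomN p q m s = 0
    rw [ih (s + 1) (by omega), ih s (by omega)]
    ring

lemma qpBinomN_mul_fact (p q : Rˣ) :
    ∀ m t : ℕ, qpBinomN p q m t * qpFact p q t
      = ∏ i ∈ Finset.range t, qpIntN p q (m - i) := by
  intro m
  induction m with
  | zero =>
    intro t
    match t with
    | 0 => simp [qpBinomN, qpFact]
    | s + 1 =>
      rw [show qpBinomN p q 0 (s+1) = 0 from rfl, zero_mul]
      refine (Finset.prod_eq_zero (Finset.mem_range.mpr (Nat.succ_pos s)) ?_).symm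
      simpa using (qpIntN_zero p q)
  | succ m ih =>
    intro t
    match t with
    | 0 => simp [qpBinomN, qpFact]
    | s + 1 =>
      show (((q⁻¹ : Rˣ) : R) ^ (s + 1) * qpBinomN p q m (s + 1)
          + ((p * q : Rˣ) : R) ^ (m - s) * qpBinomN p q m s) * qpFact p q (s + 1)
        = ∏ i ∈ Finset.range (s + 1), qpIntN p q (m + 1 - i)
      rcases lt_or_ge m s with hms | hsm
      · -- s > m : everything vanishes
        rw [qpBinomN_eq_zero p q m (s+1) (by omega), qpBinomN_eq_zero p q m s hms]
        rw [mul_zero, mul_zero, add_zero, zero_mul]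
        refine (Finset.prod_eq_zero (i := m + 1) (Finset.mem_range.mpr (by omega)) ?_).symm
        simpa using (qpIntN_zero p q)
      · -- s ≤ m
        have key : qpIntN p q (m + 1) =
            ((q⁻¹ : Rˣ) : R) ^ (s + 1) * qpIntN p q (m - s)
              + ((p * q : Rˣ) : R) ^ (m - s) * qpIntN p q (s + 1) := by
          have := qpIntN_add p q (s + 1) (m - s)
          rw [show s + 1 + (m - s) = m + 1 by omega] at this
          rw [this]; ring
        have h1 : qpBinomN p q m (s + 1) * qpFact p q (s + 1)
            = (∏ i ∈ Finset.range s, qpIntN p q (m - i)) * qpIntN p q (m - s) := by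
          rw [ih (s + 1), Finset.prod_range_succ]
        have h2 : qpBinomN p q m s * qpFact p q s
            = ∏ i ∈ Finset.range s, qpIntN p q (m - i) := ih s
        have hRHS : (∏ i ∈ Finset.range (s + 1), qpIntN p q (m + 1 - i))
            = (∏ i ∈ Finset.range s, qpIntN p q (m - i)) * qpIntN p q (m + 1) := by
          rw [Finset.prod_range_succ']
          congr 1
          exact Finset.prod_congr rfl fun k _ => by rw [Nat.succ_sub_succ]
        rw [hRHS, key, qpFact_succ, add_mul]
        calc ((q⁻¹ : Rˣ) : R) ^ (s + 1) * qpBinomN p q m (s + 1) * (qpFact p q s * qpIntN p q (s+1))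
              + ((p * q : Rˣ) : R) ^ (m - s) * qpBinomN p q m s * (qpFact p q s * qpIntN p q (s+1))
            = ((q⁻¹ : Rˣ) : R) ^ (s + 1) * (qpBinomN p q m (s + 1) * qpFact p q (s + 1))
              + ((p * q : Rˣ) : R) ^ (m - s) * (qpBinomN p q m s * qpFact p q s) * qpIntN p q (s+1) := by
              rw [qpFact_succ]; ring
          _ = _ := by rw [h1, h2]; ring

lemma qpBinomN_mem (p q : Rˣ) :
    ∀ m t : ℕ, qpBinomN p q m t ∈
      Subring.closure ({(p : R), (q : R), ((q⁻¹ : Rˣ) : R)} : Set R) := by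
  have hp : (p : R) ∈ Subring.closure ({(p : R), (q : R), ((q⁻¹ : Rˣ) : R)} : Set R) :=
    Subring.subset_closure (by simp)
  have hq : (q : R) ∈ Subring.closure ({(p : R), (q : R), ((q⁻¹ : Rˣ) : R)} : Set R) :=
    Subring.subset_closure (by simp)
  have hqi : ((q⁻¹ : Rˣ) : R) ∈ Subring.closure ({(p : R), (q : R), ((q⁻¹ : Rˣ) : R)} : Set R) :=
    Subring.subset_closure (by simp)
  intro m
  induction m with
  | zero =>
    intro t
    match t with
    | 0 => exact Subring.one_mem _
    | s + 1 => exact Subring.zero_mem _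
  | succ m ih =>
    intro t
    match t with
    | 0 => exact Subring.one_mem _
    | s + 1 =>
      show ((q⁻¹ : Rˣ) : R) ^ (s + 1) * qpBinomN p q m (s + 1)
          + ((p * q : Rˣ) : R) ^ (m - s) * qpBinomN p q m s ∈ _
      have hpq : ((p * q : Rˣ) : R) ∈
          Subring.closure ({(p : R), (q : R), ((q⁻¹ : Rˣ) : R)} : Set R) := by
        rw [Units.val_mul]; exact Subring.mul_mem _ hp hq
      exact Subring.add_mem _
        (Subring.mul_mem _ (Subring.pow_mem _ hqi _) (ih (s + 1)))
        (Subring.mul_mem _ (Subring.pow_mem _ hpq _) (ih s))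

end QPi

/-- For `a ∈ ℤ` and `n ∈ ℕ`, the `(q,π)`-binomial coefficient
`[a choose n]_{q,π}` (the element satisfying
`[a choose n]_{q,π} · [n]^!_{q,π} = ∏_{i=1}^n [a+1-i]_{q,π}`) lies in `ℤ[q,q^{-1},π]`,
i.e. in the subring generated by `π`, `q` and `q^{-1}` (here `π² = 1`). -/
theorem qpBinom_is_laurent {R : Type*} [CommRing R] (p q : Rˣ) (hp : (p : R) ^ 2 = 1)
    (a : ℤ) (n : ℕ) :
    QPi.qpBinom p q a n * QPi.qpFact p q n =
      (∏ i ∈ Finset.range n, QPi.qpInt p q (a - (i : ℤ))) ∧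
    QPi.qpBinom p q a n ∈
      Subring.closure ({(p : R), (q : R), ((q⁻¹ : Rˣ) : R)} : Set R) := by
  constructor
  · -- the product identity
    rcases le_or_gt 0 a with ha | ha
    · rw [QPi.qpBinom, if_pos ha]
      rcases le_or_gt n a.toNat with hn | hn
      · rw [QPi.qpBinomN_mul_fact]
        refine Finset.prod_congr rfl fun i hi => ?_
        rw [Finset.mem_range] at hi
        have h0 : (0 : ℤ) ≤ a - i := by omega
        rw [QPi.qpInt, if_pos h0]
        congr 1
        omega
      · rw [QPi.qpBinomN_eq_zero p q _ n hn, zero_mul]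
        refine (Finset.prod_eq_zero (i := a.toNat) (Finset.mem_range.mpr hn) ?_).symm
        have : a - (a.toNat : ℤ) = 0 := by omega
        rw [this, QPi.qpInt, if_pos le_rfl]
        simpa using QPi.qpIntN_zero p q
    · rw [QPi.qpBinom, if_neg (not_le.mpr ha)]
      set b := a.natAbs with hb
      have hb1 : 1 ≤ b := by omega
      have hrw : ∀ i ∈ Finset.range n, QPi.qpInt p q (a - i)
          = -((p : R) ^ (b + i)) * QPi.qpIntN p q (b + i) := by
        intro i hi
        have hneg : ¬ (0 : ℤ) ≤ a - i := by omega
        rw [QPi.qpInt, if_neg hneg]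
        have : (a - i).natAbs = b + i := by omega
        rw [this]
      rw [Finset.prod_congr rfl hrw]
      have hprodsplit : (∏ i ∈ Finset.range n, (-((p : R) ^ (b + i)) * QPi.qpIntN p q (b + i)))
          = (-1 : R) ^ n * (p : R) ^ (∑ i ∈ Finset.range n, (b + i)) *
            ∏ i ∈ Finset.range n, QPi.qpIntN p q (b + i) := by
        have : ∀ i ∈ Finset.range n, (-((p : R) ^ (b + i)) * QPi.qpIntN p q (b + i))
            = (-1 : R) * ((p : R) ^ (b + i) * QPi.qpIntN p q (b + i)) := fun i _ => by ring
        rw [Finset.prod_congr rfl this, Finset.prod_mul_distrib, Finset.prod_const,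
          Finset.card_range, Finset.prod_mul_distrib, Finset.prod_pow_eq_pow_sum, mul_assoc]
      rw [hprodsplit]
      have hexp : (∑ i ∈ Finset.range n, (b + i)) = b * n + n * (n - 1) / 2 := by
        rw [Finset.sum_add_distrib, Finset.sum_const, Finset.card_range, Finset.sum_range_id,
          smul_eq_mul, mul_comm]
      have hprod : (∏ i ∈ Finset.range n, QPi.qpIntN p q (b + i))
          = ∏ i ∈ Finset.range n, QPi.qpIntN p q (n + b - 1 - i) := by
        rw [← Finset.prod_range_reflect]
        refine Finset.prod_congr rfl fun i hi => ?_
        rw [Finset.mem_range] at hi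
        congr 1
        omega
      rw [hexp, hprod, mul_assoc, ← QPi.qpBinomN_mul_fact]
  · -- closure membership
    rcases le_or_gt 0 a with ha | ha
    · rw [QPi.qpBinom, if_pos ha]; exact QPi.qpBinomN_mem p q _ n
    · rw [QPi.qpBinom, if_neg (not_le.mpr ha)]
      have hp' : (p : R) ∈ Subring.closure ({(p : R), (q : R), ((q⁻¹ : Rˣ) : R)} : Set R) :=
        Subring.subset_closure (by simp)
      exact Subring.mul_mem _
        (Subring.mul_mem _ (Subring.pow_mem _ (Subring.neg_mem _ (Subring.one_mem _)) n)
          (Subring.pow_mem _ hp' _))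
        (QPi.qpBinomN_mem p q _ n)
end

section
/- With t := √π · q, for all n ∈ ℕ and 0 ≤ r ≤ n one has [n choose r]_{q,π} = (√π)^{(n-r)r} [n choose r]_t, relating the (q,π)-binomial to the balanced t-binomial. -/
namespace QPi

variable {R : Type*} [CommRing R]

/-- Division-free balanced quantum integer `[n]_v = (v^n − v^{−n})/(v − v^{−1})`. -/
def vIntN (v : Rˣ) (n : ℕ) : R :=
  ∑ k ∈ Finset.range n, ((v : R)) ^ (n - 1 - k) * ((v⁻¹ : Rˣ) : R) ^ k

/-- Balanced quantum factorial `[n]^!_v`. -/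
def vFact (v : Rˣ) (n : ℕ) : R := ∏ i ∈ Finset.range n, vIntN v (i + 1)

/-- Balanced Gaussian binomial via the Pascal rule
`[m+1 choose s+1]_v = v^{-(s+1)} [m choose s+1]_v + v^{m−s} [m choose s]_v`. -/
def vBinomN (v : Rˣ) : ℕ → ℕ → R
  | _, 0 => 1
  | 0, _ + 1 => 0
  | m + 1, s + 1 =>
      ((v⁻¹ : Rˣ) : R) ^ (s + 1) * vBinomN v m (s + 1) + ((v : R)) ^ (m - s) * vBinomN v m s

end QPi


namespace QPiAux

variable {R : Type*} [CommRing R]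

lemma qp_succ_succ (p q : Rˣ) (m t : ℕ) :
    QPi.qpBinomN (R := R) p q (m + 1) (t + 1) =
      ((q⁻¹ : Rˣ) : R) ^ (t + 1) * QPi.qpBinomN p q m (t + 1)
        + ((p * q : Rˣ) : R) ^ (m - t) * QPi.qpBinomN p q m t := rfl

lemma v_succ_succ (v : Rˣ) (m t : ℕ) :
    QPi.vBinomN (R := R) v (m + 1) (t + 1) =
      ((v⁻¹ : Rˣ) : R) ^ (t + 1) * QPi.vBinomN v m (t + 1)
        + ((v : R)) ^ (m - t) * QPi.vBinomN v m t := rfl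

lemma qpBinomN_eq_zero (p q : Rˣ) : ∀ m s : ℕ, m < s → QPi.qpBinomN (R := R) p q m s = 0 := by
  intro m
  induction m with
  | zero =>
    intro s hs
    match s, hs with
    | s + 1, _ => rfl
  | succ m ih =>
    intro s hs
    match s, hs with
    | s + 1, hs =>
      rw [qp_succ_succ, ih (s + 1) (by omega), ih s (by omega), mul_zero, mul_zero, add_zero]

lemma vBinomN_eq_zero (v : Rˣ) : ∀ m s : ℕ, m < s → QPi.vBinomN (R := R) v m s = 0 := by
  intro m
  induction m with
  | zero =>
    intro s hs
    match s, hs with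
    | s + 1, _ => rfl
  | succ m ih =>
    intro s hs
    match s, hs with
    | s + 1, hs =>
      rw [v_succ_succ, ih (s + 1) (by omega), ih s (by omega), mul_zero, mul_zero, add_zero]

end QPiAux

/-- With `t = √π·q`, for `0 ≤ r ≤ n` one has
`[n choose r]_{q,π} = (√π)^{(n−r)r} [n choose r]_t`. -/
theorem qpBinom_eq_sqrtPi_pow_mul_vBinom {R : Type*} [CommRing R] (sp q : Rˣ)
    (h4 : ((sp : R)) ^ 4 = 1) (n r : ℕ) (hr : r ≤ n) :
    QPi.qpBinomN (sp ^ 2) q n r =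
      ((sp : R)) ^ ((n - r) * r) * QPi.vBinomN (sp * q) n r := by
  induction n generalizing r with
  | zero =>
    obtain rfl : r = 0 := Nat.le_zero.mp hr
    simp [QPi.qpBinomN, QPi.vBinomN]
  | succ m ih =>
    cases r with
    | zero => simp [QPi.qpBinomN, QPi.vBinomN]
    | succ t =>
      have ht : t ≤ m := Nat.succ_le_succ_iff.mp hr
      rcases Nat.lt_or_ge t m with hlt | hge
      · obtain ⟨j, rfl⟩ : ∃ j, m = t + (j + 1) := ⟨m - t - 1, by omega⟩
        have ih1 := ih (t + 1) (by omega)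
        have ih2 := ih t (by omega)
        rw [QPiAux.qp_succ_succ, QPiAux.v_succ_succ, ih1, ih2,
          show t + (j + 1) - t = j + 1 by omega,
          show t + (j + 1) - (t + 1) = j by omega,
          show t + (j + 1) + 1 - (t + 1) = j + 1 by omega]
        simp only [mul_inv_rev, Units.val_mul, Units.val_pow_eq_pow_val]
        have hone : (((sp : R)) * ((sp⁻¹ : Rˣ) : R)) ^ (t + 1) = 1 := by
          rw [Units.mul_inv, one_pow]
        linear_combination (-(((sp : R)) ^ (j * (t + 1)) * ((q⁻¹ : Rˣ) : R) ^ (t + 1) *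
          QPi.vBinomN (sp * q) (t + (j + 1)) (t + 1))) * hone
      · obtain rfl : t = m := le_antisymm ht hge
        rw [QPiAux.qp_succ_succ, QPiAux.v_succ_succ,
          QPiAux.qpBinomN_eq_zero _ _ _ _ (by omega),
          QPiAux.vBinomN_eq_zero _ _ _ (by omega), ih t le_rfl]
        simp [Nat.sub_self]
end

section
/- Let (I,·) be a bar-consistent super Cartan datum with ℓ odd, and define i⋄j = (i·j)ℓᵢℓⱼ where ℓᵢ = min{ r > 0 : r(i·i)/2 ∈ ℓℤ }. Then (I,⋄) is again a bar-consistent super Cartan datum with the same parity decomposition; i.e., (i⋄i)/2 ∈ ℤ_{>0}, 2(i⋄j)/(i⋄i) ∈ -ℕ for i ≠ j, 2(i⋄j)/(i⋄i) is even whenever i ∈ I₁, and (i⋄i)/2 ≡ p(i) (mod 2). -/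
/-- A bar-consistent super Cartan datum: a finite symmetric integral form `i·j` with
`dᵢ = (i·i)/2 ∈ ℤ_{>0}`, `2(i·j)/(i·i) ∈ −ℕ` for `i ≠ j`, a nonempty odd part (`p i = true`)
with `2(i·j)/(i·i)` even for odd `i`, and `(i·i)/2 ≡ p(i) (mod 2)`. -/
structure SuperCartanDatum (I : Type*) where
  form : I → I → ℤ
  symm : ∀ i j, form i j = form j i
  diag_pos : ∀ i, 0 < form i i
  diag_even : ∀ i, 2 ∣ form i i
  off_nonpos : ∀ i j, i ≠ j → 2 * form i j ≤ 0
  off_dvd : ∀ i j, i ≠ j → form i i ∣ 2 * form i j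
  p : I → Bool
  odd_nonempty : ∃ i, p i = true
  odd_even : ∀ i j, p i = true → form i i ∣ form i j
  bar : ∀ i, (form i i / 2) % 2 = (if p i then 1 else 0)

/-- `ℓᵢ = min { r > 0 : r·(i·i)/2 ∈ ℓℤ }`. -/
noncomputable def SuperCartanDatum.elli {I : Type*} (C : SuperCartanDatum I) (ℓ : ℕ) (i : I) : ℕ :=
  sInf {r : ℕ | 0 < r ∧ (ℓ : ℤ) ∣ (r : ℤ) * (C.form i i / 2)}

private lemma elli_facts {I : Type*} (C : SuperCartanDatum I) {ℓ : ℕ} (hℓ : 0 < ℓ) (i : I) :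
    0 < C.elli ℓ i ∧ (ℓ:ℤ) ∣ (C.elli ℓ i : ℤ) * (C.form i i / 2) ∧ C.elli ℓ i ∣ ℓ ∧
    ∀ x : ℤ, (ℓ:ℤ) ∣ x * (C.form i i / 2) → (C.elli ℓ i : ℤ) ∣ x := by
  have hd : (0:ℤ) < C.form i i / 2 := by
    have h1 := C.diag_pos i; have h2 := C.diag_even i; omega
  set d : ℤ := C.form i i / 2 with hdd
  set n : ℕ := d.toNat with hn
  have hnd : (n:ℤ) = d := Int.toNat_of_nonneg hd.le
  set g : ℕ := Nat.gcd ℓ n with hg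
  have hg0 : 0 < g := Nat.gcd_pos_of_pos_left n hℓ
  set L : ℕ := ℓ / g with hL
  set N : ℕ := n / g with hN
  have hLg : g * L = ℓ := Nat.mul_div_cancel' (Nat.gcd_dvd_left ℓ n)
  have hNg : g * N = n := Nat.mul_div_cancel' (Nat.gcd_dvd_right ℓ n)
  have hco : Nat.Coprime L N := Nat.coprime_div_gcd_div_gcd hg0
  have hL0 : 0 < L := Nat.div_pos (Nat.le_of_dvd hℓ (Nat.gcd_dvd_left ℓ n)) hg0
  -- nat characterization
  have hmem : ∀ r : ℕ, ((ℓ:ℤ) ∣ (r:ℤ) * d) ↔ ℓ ∣ r * n := by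
    intro r
    rw [← hnd, ← Nat.cast_mul, Int.natCast_dvd_natCast]
  have hdvdL : ∀ r : ℕ, ℓ ∣ r * n → L ∣ r := by
    intro r hr
    have : g * L ∣ g * (r * N) := by
      rw [hLg]
      calc ℓ ∣ r * n := hr
        _ = g * (r * N) := by rw [← hNg]; ring
    have h2 : L ∣ r * N := (mul_dvd_mul_iff_left hg0.ne').mp this
    exact hco.dvd_of_dvd_mul_right h2
  have hLmem : L ∈ {r : ℕ | 0 < r ∧ (ℓ : ℤ) ∣ (r : ℤ) * d} := by
    refine ⟨hL0, (hmem L).mpr ⟨N, ?_⟩⟩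
    rw [← hLg, ← hNg]; ring
  have hne : {r : ℕ | 0 < r ∧ (ℓ : ℤ) ∣ (r : ℤ) * d}.Nonempty := ⟨L, hLmem⟩
  have hsmem := Nat.sInf_mem hne
  have heq : C.elli ℓ i = L := by
    have h1 : C.elli ℓ i ≤ L := Nat.sInf_le hLmem
    have h2 : L ≤ C.elli ℓ i :=
      Nat.le_of_dvd hsmem.1 (hdvdL _ ((hmem _).mp hsmem.2))
    omega
  have hcoZ : IsCoprime (L:ℤ) (N:ℤ) := Nat.isCoprime_iff_coprime.mpr hco
  refine ⟨by rw [heq]; exact hL0, hsmem.2, by rw [heq]; exact ⟨g, by rw [← hLg, Nat.mul_comm]⟩, ?_⟩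
  intro x hx
  rw [heq]
  have h1 : (g:ℤ) * L ∣ (g:ℤ) * (x * N) := by
    have : ((g*L : ℕ):ℤ) ∣ x * ((g*N : ℕ):ℤ) := by rw [hLg, hNg, hnd]; exact hx
    push_cast at this
    calc ((g:ℤ)) * L ∣ x * ((g:ℤ)*N) := this
      _ = (g:ℤ) * (x * N) := by ring
  have h2 : (L:ℤ) ∣ x * N := by
    have hgz : (g:ℤ) ≠ 0 := by exact_mod_cast hg0.ne'
    exact (mul_dvd_mul_iff_left hgz).mp h1
  exact hcoZ.dvd_of_dvd_mul_right h2

/-- for `ℓ` odd, `i⋄j = (i·j)ℓᵢℓⱼ` is again a bar-consistent super Cartan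
datum with the same parity decomposition. -/
theorem diamond_superCartanDatum {I : Type*} (C : SuperCartanDatum I) (ℓ : ℕ)
    (hℓ : 0 < ℓ) (hodd : Odd ℓ) :
    (∀ i, 0 < C.form i i * (C.elli ℓ i : ℤ) * (C.elli ℓ i : ℤ) ∧
      2 ∣ C.form i i * (C.elli ℓ i : ℤ) * (C.elli ℓ i : ℤ)) ∧
    (∀ i j, i ≠ j → 2 * (C.form i j * (C.elli ℓ i : ℤ) * (C.elli ℓ j : ℤ)) ≤ 0 ∧
      C.form i i * (C.elli ℓ i : ℤ) * (C.elli ℓ i : ℤ) ∣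
        2 * (C.form i j * (C.elli ℓ i : ℤ) * (C.elli ℓ j : ℤ))) ∧
    (∀ i j, C.p i = true →
      C.form i i * (C.elli ℓ i : ℤ) * (C.elli ℓ i : ℤ) ∣
        C.form i j * (C.elli ℓ i : ℤ) * (C.elli ℓ j : ℤ)) ∧
    (∀ i, (C.form i i * (C.elli ℓ i : ℤ) * (C.elli ℓ i : ℤ) / 2) % 2 =
      (if C.p i then 1 else 0)) := by
  have hfacts := fun i => elli_facts C hℓ i
  have hpos : ∀ i, (0:ℤ) < (C.elli ℓ i : ℤ) := fun i => by exact_mod_cast (hfacts i).1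
  have hoddli : ∀ i, ((C.elli ℓ i : ℤ)) % 2 = 1 := by
    intro i
    have h1 : C.elli ℓ i % 2 = 1 := by
      rcases Nat.even_or_odd (C.elli ℓ i) with he | ho
      · exfalso
        have h2 : (2:ℕ) ∣ ℓ := dvd_trans he.two_dvd (hfacts i).2.2.1
        have h3 := Nat.odd_iff.mp hodd
        omega
      · exact Nat.odd_iff.mp ho
    omega
  refine ⟨fun i => ⟨?_, ?_⟩, fun i j hij => ⟨?_, ?_⟩, fun i j hpi => ?_, fun i => ?_⟩
  · exact mul_pos (mul_pos (C.diag_pos i) (hpos i)) (hpos i)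
  · exact ((C.diag_even i).mul_right _).mul_right _
  · have h0 := C.off_nonpos i j hij
    nlinarith [mul_nonneg (hpos i).le (hpos j).le]
  · obtain ⟨a, ha⟩ := C.off_dvd i j hij
    obtain ⟨e, he⟩ := C.diag_even i
    obtain ⟨b, hb⟩ := C.off_dvd j i (Ne.symm hij)
    obtain ⟨f, hf⟩ := C.diag_even j
    have hfii2 : C.form i i / 2 = e := by omega
    have hfjj2 : C.form j j / 2 = f := by omega
    have hfij : C.form i j = e * a := by
      have h1 : 2 * C.form i j = 2 * (e * a) := by rw [ha, he]; ring
      linarith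
    have hfji : C.form i j = f * b := by
      have h1 : 2 * C.form i j = 2 * (f * b) := by rw [C.symm i j, hb, hf]; ring
      linarith
    obtain ⟨c, hc⟩ := (hfacts j).2.1
    rw [hfjj2] at hc
    have hdiv : (ℓ:ℤ) ∣ (a * (C.elli ℓ j : ℤ)) * e := by
      refine ⟨c * b, ?_⟩
      have heq : e * a = f * b := by rw [← hfij, hfji]
      linear_combination (C.elli ℓ j : ℤ) * heq + b * hc
    obtain ⟨c2, hc2⟩ := (hfacts i).2.2.2 _ (by rw [hfii2]; exact hdiv)
    refine ⟨c2, ?_⟩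
    rw [hfij, he]
    linear_combination 2 * e * (C.elli ℓ i : ℤ) * hc2
  · by_cases hij : j = i
    · subst hij; exact dvd_rfl
    · obtain ⟨a, ha⟩ := C.odd_even i j hpi
      obtain ⟨e, he⟩ := C.diag_even i
      obtain ⟨b, hb⟩ := C.off_dvd j i (fun h => hij h)
      obtain ⟨f, hf⟩ := C.diag_even j
      have hfii2 : C.form i i / 2 = e := by omega
      have hfjj2 : C.form j j / 2 = f := by omega
      have hfij : C.form i j = 2 * (e * a) := by rw [ha, he]; ring
      have hfji : C.form i j = f * b := by
        have h1 : 2 * C.form i j = 2 * (f * b) := by rw [C.symm i j, hb, hf]; ring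
        linarith
      obtain ⟨c, hc⟩ := (hfacts j).2.1
      rw [hfjj2] at hc
      have hdiv2 : (ℓ:ℤ) ∣ 2 * ((a * (C.elli ℓ j : ℤ)) * e) := by
        refine ⟨c * b, ?_⟩
        have heq : 2 * (e * a) = f * b := by rw [← hfij, hfji]
        linear_combination (C.elli ℓ j : ℤ) * heq + b * hc
      have hcop : IsCoprime ((ℓ:ℤ)) 2 := by
        have h1 : Nat.Coprime ℓ 2 := Nat.coprime_two_right.mpr hodd
        have h2 := Nat.isCoprime_iff_coprime.mpr h1
        exact_mod_cast h2
      have hdiv : (ℓ:ℤ) ∣ (a * (C.elli ℓ j : ℤ)) * e := hcop.dvd_of_dvd_mul_left hdiv2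
      obtain ⟨c2, hc2⟩ := (hfacts i).2.2.2 _ (by rw [hfii2]; exact hdiv)
      refine ⟨c2, ?_⟩
      rw [ha, he]
      linear_combination 2 * e * (C.elli ℓ i : ℤ) * hc2
  · obtain ⟨e, he⟩ := C.diag_even i
    have hfii2 : C.form i i / 2 = e := by omega
    have hrw : C.form i i * (C.elli ℓ i : ℤ) * (C.elli ℓ i : ℤ) =
        2 * (e * ((C.elli ℓ i : ℤ) * (C.elli ℓ i : ℤ))) := by rw [he]; ring
    rw [hrw, Int.mul_ediv_cancel_left _ two_ne_zero]
    have hbar := C.bar i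
    rw [hfii2] at hbar
    obtain ⟨m, hm⟩ := Int.odd_iff.mpr (hoddli i)
    obtain ⟨X, hX⟩ : ∃ X, e * ((C.elli ℓ i : ℤ) * (C.elli ℓ i : ℤ)) = 2 * X + e :=
      ⟨e * (2 * m * m + 2 * m), by rw [hm]; ring⟩
    rw [hX, ← hbar]
    omega
end
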